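/- arXiv:2504.01262 — 11 statements merged into one kernel-verified Lean document; each statement's English description precedes it below -/
import Mathlib

section
/- Let g: D_{m,1} → ℕ be defined on words over {A,T,G,C} (identified with {0,1,2,3}) by g(c) = Σ_{i=0}^{m-1} |{Δ ∈ {0,1,2} : Δ < c_i and c_{i+1} ≠ Δ}| · 3^i, with the convention c_m = 3. Then g restricted to the set D_{m,1} of words with no two adjacent equal symbols is injective. -/
/-- Extension of a word `w` in `{A,T,G,C}^m` (symbols identified with `Fin 4`,
`A<T<G<C` corresponding to `0<1<2<3`) to all of `Nat`, with the convention that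
out-of-bounds symbols are `C = 3`. Position `i` carries significance `3^i`
(significance decreases from left to right in the word `c_{m-1} ... c_0`). -/
def ext (m : ℕ) (w : Fin m → Fin 4) (i : ℕ) : Fin 4 :=
  if h : i < m then w ⟨i, h⟩ else 3

/-- The `i`-th symbol contribution for the `ℓ = 1` D-LOCO rule:
`|{Δ ∈ {0,1,2} : Δ < c_i ∧ c_{i+1} ≠ Δ}| * 3^i`. -/
def contrib (m : ℕ) (w : Fin m → Fin 4) (i : ℕ) : ℕ :=
  (Finset.univ.filter fun Δ : Fin 4 => Δ < ext m w i ∧ ext m w (i + 1) ≠ Δ).card * 3 ^ i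

/-- The (formal) index of a word under the `ℓ = 1` D-LOCO encoding-decoding rule. -/
def gidx (m : ℕ) (w : Fin m → Fin 4) : ℕ := ∑ i ∈ Finset.range m, contrib m w i

/-- Membership in `D_{m,1}`: no two adjacent equal symbols (no run of length 2). -/
def noAdj (m : ℕ) (w : Fin m → Fin 4) : Prop :=
  ∀ i : ℕ, i + 1 < m → ext m w (i + 1) ≠ ext m w i

/-- The digit contributed by symbol `c` with next symbol `a`. -/
def digit (a c : Fin 4) : ℕ :=
  (Finset.univ.filter fun Δ : Fin 4 => Δ < c ∧ a ≠ Δ).card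

lemma contrib_eq (m : ℕ) (w : Fin m → Fin 4) (i : ℕ) :
    contrib m w i = digit (ext m w (i + 1)) (ext m w i) * 3 ^ i := rfl

lemma digit_le : ∀ a c : Fin 4, a ≠ c → digit a c ≤ 2 := by decide

lemma digit_inj : ∀ a c c' : Fin 4, a ≠ c → a ≠ c' → digit a c = digit a c' → c = c' := by
  decide

lemma digit3_inj : ∀ c c' : Fin 4, digit 3 c = digit 3 c' → c = c' := by decide

lemma sum2pow (j : ℕ) : ∑ i ∈ Finset.range j, 2 * 3 ^ i = 3 ^ j - 1 := by
  induction j with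
  | zero => simp
  | succ n ih =>
    have h1 : 1 ≤ 3 ^ n := Nat.one_le_pow _ _ (by norm_num)
    rw [Finset.sum_range_succ, ih, pow_succ]
    omega

lemma arith (A B P Q X : ℕ) (hA : A ≤ X - 1) (hX : 1 ≤ X)
    (hS : A + P = B + Q) (h1 : P + X ≤ Q) : False := by omega

lemma key (m : ℕ) (w v : Fin m → Fin 4) (hw : noAdj m w) (hv : noAdj m v)
    (hg : gidx m w = gidx m v) (j : ℕ) (hj : j < m)
    (hgt : ∀ i, j < i → ext m w i = ext m v i) : ext m w j = ext m v j := by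
  have htail : ∑ i ∈ Finset.Ico (j + 1) m, contrib m w i
      = ∑ i ∈ Finset.Ico (j + 1) m, contrib m v i := by
    apply Finset.sum_congr rfl
    intro i hi
    simp only [Finset.mem_Ico] at hi
    rw [contrib_eq, contrib_eq, hgt i (by omega), hgt (i + 1) (by omega)]
  have hsplit : ∀ u : Fin m → Fin 4, gidx m u =
      ∑ i ∈ Finset.range (j + 1), contrib m u i + ∑ i ∈ Finset.Ico (j + 1) m, contrib m u i := by
    intro u
    rw [gidx, Finset.range_eq_Ico,
      ← Finset.sum_Ico_consecutive _ (Nat.zero_le _) (by omega : j + 1 ≤ m),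
      ← Finset.range_eq_Ico]
  have hS : ∑ i ∈ Finset.range (j + 1), contrib m w i
      = ∑ i ∈ Finset.range (j + 1), contrib m v i := by
    have h1 := hsplit w
    have h2 := hsplit v
    omega
  by_contra hne
  have ha : ext m w (j + 1) = ext m v (j + 1) := hgt (j + 1) (by omega)
  set a := ext m w (j + 1) with haw
  have hd : digit a (ext m w j) ≠ digit a (ext m v j) := by
    intro h
    rcases Nat.lt_or_ge (j + 1) m with hlt | hge
    · exact hne (digit_inj a _ _ (hw j hlt) (by rw [ha]; exact hv j hlt) h)
    · have ha3 : a = 3 := by rw [haw, ext, dif_neg (by omega)]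
      rw [ha3] at h
      exact hne (digit3_inj _ _ h)
  have hbound : ∀ u : Fin m → Fin 4, noAdj m u →
      ∑ i ∈ Finset.range j, contrib m u i ≤ 3 ^ j - 1 := by
    intro u hu
    calc ∑ i ∈ Finset.range j, contrib m u i ≤ ∑ i ∈ Finset.range j, 2 * 3 ^ i := by
          apply Finset.sum_le_sum
          intro i hi
          simp only [Finset.mem_range] at hi
          rw [contrib_eq]
          exact Nat.mul_le_mul_right _ (digit_le _ _ (hu i (by omega)))
      _ = 3 ^ j - 1 := sum2pow j
  have hSw := Finset.sum_range_succ (contrib m w) j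
  have hSv := Finset.sum_range_succ (contrib m v) j
  rw [hSw, hSv, contrib_eq, contrib_eq] at hS
  rw [← ha] at hS
  have hX : 1 ≤ 3 ^ j := Nat.one_le_pow _ _ (by norm_num)
  rcases Nat.lt_or_ge (digit a (ext m w j)) (digit a (ext m v j)) with hlt | hge
  · refine arith _ _ _ _ (3 ^ j) (hbound w hw) hX hS ?_
    calc digit a (ext m w j) * 3 ^ j + 3 ^ j = (digit a (ext m w j) + 1) * 3 ^ j := by ring
      _ ≤ digit a (ext m v j) * 3 ^ j := Nat.mul_le_mul_right _ (by omega)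
  · have hgt' : digit a (ext m v j) < digit a (ext m w j) := lt_of_le_of_ne hge (fun h => hd h.symm)
    refine arith _ _ _ _ (3 ^ j) (hbound v hv) hX hS.symm ?_
    calc digit a (ext m v j) * 3 ^ j + 3 ^ j = (digit a (ext m v j) + 1) * 3 ^ j := by ring
      _ ≤ digit a (ext m w j) * 3 ^ j := Nat.mul_le_mul_right _ (by omega)

/-- the `ℓ = 1` encoding-decoding rule `g` is injective on
`D_{m,1}`, the set of words with no two adjacent equal symbols. -/
theorem gidx_injOn_dloco (m : ℕ) :
    Set.InjOn (gidx m) {w : Fin m → Fin 4 | noAdj m w} := by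
  intro w hw v hv hg
  have hw' : noAdj m w := hw
  have hv' : noAdj m v := hv
  have hall : ∀ k j, m - j ≤ k → ext m w j = ext m v j := by
    intro k
    induction k with
    | zero =>
      intro j hj
      rw [ext, ext, dif_neg (by omega), dif_neg (by omega)]
    | succ k ih =>
      intro j hj
      by_cases hjm : j < m
      · exact key m w v hw' hv' hg j hjm (fun i hi => ih i (by omega))
      · rw [ext, ext, dif_neg hjm, dif_neg hjm]
  funext x
  have h := hall m x.val (by omega)
  rwa [ext, ext, dif_pos x.isLt, dif_pos x.isLt, Fin.eta] at h
end

section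
/- For any codeword c in D_{m,ℓ} and its symbol-wise complement c̄ (obtained by swapping A↔C and T↔G at every position), c̄ is also a codeword in D_{m,ℓ}, and g(c) + g(c̄) = N(m) - 1, where g is the D-LOCO encoding-decoding rule and N(m) is the cardinality of D_{m,ℓ}. (Stated and proved for ℓ = 1.) -/
/-- The symbol-wise complement, swapping `A ↔ C` and `T ↔ G`,
i.e., `a ↦ 3 - a` on `Fin 4`. -/
def wordCompl (m : ℕ) (w : Fin m → Fin 4) : Fin m → Fin 4 := fun i => 3 - w i

lemma ext_lt (m : ℕ) (w : Fin m → Fin 4) (i : ℕ) (h : i < m) :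
    ext m w i = w ⟨i, h⟩ := dif_pos h

lemma ext_ge (m : ℕ) (w : Fin m → Fin 4) (i : ℕ) (h : ¬ i < m) :
    ext m w i = 3 := dif_neg h

lemma compl_ne : ∀ a b : Fin 4, a ≠ b → (3 : Fin 4) - a ≠ 3 - b := by decide

lemma card_interior : ∀ a b : Fin 4, b ≠ a →
    (Finset.univ.filter fun Δ : Fin 4 => Δ < a ∧ b ≠ Δ).card +
    (Finset.univ.filter fun Δ : Fin 4 => Δ < 3 - a ∧ 3 - b ≠ Δ).card = 2 := by decide

lemma card_top : ∀ a : Fin 4,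
    (Finset.univ.filter fun Δ : Fin 4 => Δ < a ∧ (3 : Fin 4) ≠ Δ).card +
    (Finset.univ.filter fun Δ : Fin 4 => Δ < 3 - a ∧ (3 : Fin 4) ≠ Δ).card = 3 := by decide

lemma geom2 : ∀ n : ℕ, ∑ i ∈ Finset.range n, 2 * 3 ^ i = 3 ^ n - 1 := by
  intro n
  induction n with
  | zero => simp
  | succ n ih =>
    rw [Finset.sum_range_succ, ih, pow_succ]
    have h : 1 ≤ 3 ^ n := Nat.one_le_pow _ _ (by norm_num)
    omega


/-- for `ℓ = 1`: the complement of a codeword of `D_{m,1}` is a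
codeword, and `g(c) + g(c̄) = N(m) - 1` where `N(m) = 4·3^(m-1)`. -/
theorem compl_mem_and_index_sum (m : ℕ) (hm : 1 ≤ m) (c : Fin m → Fin 4)
    (hc : noAdj m c) :
    noAdj m (wordCompl m c) ∧
    gidx m c + gidx m (wordCompl m c) = 4 * 3 ^ (m - 1) - 1 := by
  obtain ⟨n, rfl⟩ : ∃ n, m = n + 1 := ⟨m - 1, (Nat.succ_pred_eq_of_pos hm).symm⟩
  constructor
  · intro i h
    rw [ext_lt _ _ _ h, ext_lt _ _ _ (Nat.lt_of_succ_lt h)]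
    have hc' := hc i h
    rw [ext_lt _ _ _ h, ext_lt _ _ _ (Nat.lt_of_succ_lt h)] at hc'
    exact compl_ne _ _ hc'
  · have key : ∀ i < n + 1, contrib (n+1) c i + contrib (n+1) (wordCompl _ c) i =
        (if i = n then 3 else 2) * 3 ^ i := by
      intro i hi
      unfold contrib
      rw [← add_mul]
      congr 1
      rcases eq_or_lt_of_le (Nat.lt_succ_iff.mp hi) with h | h
      · subst h
        rw [if_pos rfl, ext_ge _ c (i + 1) (by omega),
            ext_ge _ (wordCompl _ c) (i + 1) (by omega),
            ext_lt _ c i hi, ext_lt _ (wordCompl _ c) i hi]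
        exact card_top _
      · have hi1 : i + 1 < n + 1 := by omega
        rw [if_neg (by omega), ext_lt _ c (i+1) hi1, ext_lt _ (wordCompl _ c) (i+1) hi1,
            ext_lt _ c i hi, ext_lt _ (wordCompl _ c) i hi]
        have hc' := hc i hi1
        rw [ext_lt _ c (i+1) hi1, ext_lt _ c i hi] at hc'
        simp only [wordCompl]
        exact card_interior _ _ hc'
    unfold gidx
    rw [← Finset.sum_add_distrib,
        Finset.sum_congr rfl (fun i hi => key i (Finset.mem_range.mp hi))]
    rw [Finset.sum_range_succ, if_pos rfl]
    rw [Finset.sum_congr rfl (fun i hi => by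
      rw [if_neg (Nat.ne_of_lt (Finset.mem_range.mp hi))])]
    rw [geom2]
    have h : 1 ≤ 3 ^ n := Nat.one_le_pow _ _ (by norm_num)
    simp only [Nat.add_sub_cancel]
    ring_nf
    omega
end

section
/- Let c ∈ D_{m,ℓ} be a word over {A,T,G,C} with no run of length ℓ+1, and let w differ from c in exactly one position. Then w contains at most one maximal run of length exceeding ℓ, and the length of any run in w is at most 2ℓ+1. -/
/-- `w` (of length `m`, read through positions `< m` of a `ℕ`-indexed family)
has a run of `k` identical symbols starting at position `s`. -/
def hasRun (m : ℕ) (w : ℕ → Fin 4) (s k : ℕ) : Prop :=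
  s + k ≤ m ∧ ∀ j < k, w (s + j) = w s

/-- A maximal run: a run which cannot be extended on either side. -/
def isMaxRun (m : ℕ) (w : ℕ → Fin 4) (s k : ℕ) : Prop :=
  hasRun m w s k ∧ 0 < k ∧ (s = 0 ∨ w (s - 1) ≠ w s) ∧ (s + k = m ∨ w (s + k) ≠ w s)

/-- Two maximal runs sharing a common position `p` coincide (asymmetric version
assuming `s₁ ≤ s₂`). -/
lemma maxRun_overlap {m : ℕ} {w : ℕ → Fin 4} {s₁ k₁ s₂ k₂ p : ℕ}
    (h1 : isMaxRun m w s₁ k₁) (h2 : isMaxRun m w s₂ k₂)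
    (hle : s₁ ≤ s₂) (hp1 : s₂ ≤ p) (hp2 : p < s₁ + k₁) (hp3 : p < s₂ + k₂) :
    s₁ = s₂ ∧ k₁ = k₂ := by
  obtain ⟨⟨hm1, hc1⟩, hk1, hL1, hR1⟩ := h1
  obtain ⟨⟨hm2, hc2⟩, hk2, hL2, hR2⟩ := h2
  have hw21 : w s₂ = w s₁ := by
    have := hc1 (s₂ - s₁) (by omega)
    rwa [show s₁ + (s₂ - s₁) = s₂ from by omega] at this
  have hend : s₁ + k₁ = s₂ + k₂ := by
    rcases lt_trichotomy (s₁ + k₁) (s₂ + k₂) with h | h | h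
    · exfalso
      have hv : w (s₁ + k₁) = w s₁ := by
        have := hc2 (s₁ + k₁ - s₂) (by omega)
        rw [show s₂ + (s₁ + k₁ - s₂) = s₁ + k₁ from by omega] at this
        rw [this, hw21]
      rcases hR1 with h' | h'
      · omega
      · exact h' hv
    · exact h
    · exfalso
      have hv : w (s₂ + k₂) = w s₂ := by
        have := hc1 (s₂ + k₂ - s₁) (by omega)
        rw [show s₁ + (s₂ + k₂ - s₁) = s₂ + k₂ from by omega] at this
        rw [this, hw21]
      rcases hR2 with h' | h'
      · omega
      · exact h' hv
  have hstart : s₁ = s₂ := by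
    by_contra h
    have hlt : s₁ < s₂ := by omega
    have hv : w (s₂ - 1) = w s₂ := by
      have := hc1 (s₂ - 1 - s₁) (by omega)
      rw [show s₁ + (s₂ - 1 - s₁) = s₂ - 1 from by omega] at this
      rw [this, hw21]
    rcases hL2 with h' | h'
    · omega
    · exact h' hv
  exact ⟨hstart, by omega⟩

/-- if `c ∈ D_{m,ℓ}` (no run of length `ℓ+1`) and `w` differs from
`c` in exactly one position, then every run in `w` has length at most `2ℓ+1`,
and `w` contains at most one maximal run of length exceeding `ℓ`. -/
theorem single_substitution_runs (m ℓ : ℕ) (hl : 1 ≤ ℓ) (hlm : ℓ ≤ m)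
    (c w : ℕ → Fin 4)
    (hc : ∀ s, ¬ hasRun m c s (ℓ + 1))
    (i : ℕ) (him : i < m) (hne : w i ≠ c i)
    (heq : ∀ j < m, j ≠ i → w j = c j) :
    (∀ s k, hasRun m w s k → k ≤ 2 * ℓ + 1) ∧
    (∀ s₁ k₁ s₂ k₂, isMaxRun m w s₁ k₁ → ℓ < k₁ →
      isMaxRun m w s₂ k₂ → ℓ < k₂ → s₁ = s₂ ∧ k₁ = k₂) := by
  -- a constant block of `w` avoiding `i` has length at most `ℓ`
  have block : ∀ s k, s + k ≤ m → (∀ j < k, w (s + j) = w s) →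
      (∀ j < k, s + j ≠ i) → k ≤ ℓ := by
    intro s k hsk hconst havoid
    by_contra hk
    push_neg at hk
    apply hc s
    have h0 : w s = c s := by
      have h := havoid 0 (by omega)
      simp only [Nat.add_zero] at h
      exact heq s (by omega) h
    refine ⟨by omega, fun j hj => ?_⟩
    have hjk : j < k := by omega
    have h1 : c (s + j) = w (s + j) := (heq (s + j) (by omega) (havoid j hjk)).symm
    rw [h1, hconst j hjk, h0]
  have part1 : ∀ s k, hasRun m w s k → k ≤ 2 * ℓ + 1 := by
    intro s k ⟨hsk, hconst⟩
    by_cases hI : ∀ j < k, s + j ≠ i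
    · have := block s k hsk hconst hI
      omega
    · push_neg at hI
      obtain ⟨j₀, hj₀, hij⟩ := hI
      have hleft : j₀ ≤ ℓ :=
        block s j₀ (by omega) (fun j hj => hconst j (by omega))
          (fun j hj => by omega)
      have hright : k - j₀ - 1 ≤ ℓ := by
        refine block (s + j₀ + 1) (k - j₀ - 1) (by omega) (fun j hj => ?_)
          (fun j hj => by omega)
        rw [show s + j₀ + 1 + j = s + (j₀ + 1 + j) from by omega,
          show s + j₀ + 1 = s + (j₀ + 1) from by omega,
          hconst (j₀ + 1 + j) (by omega), hconst (j₀ + 1) (by omega)]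
      omega
  refine ⟨part1, ?_⟩
  have contains : ∀ s k, isMaxRun m w s k → ℓ < k → s ≤ i ∧ i < s + k := by
    intro s k h hk
    obtain ⟨⟨hsk, hconst⟩, -, -, -⟩ := h
    by_contra hcon
    have havoid : ∀ j < k, s + j ≠ i := by
      intro j hj
      omega
    have := block s k hsk hconst havoid
    omega
  intro s₁ k₁ s₂ k₂ h1 hg1 h2 hg2
  obtain ⟨ha1, hb1⟩ := contains s₁ k₁ h1 hg1
  obtain ⟨ha2, hb2⟩ := contains s₂ k₂ h2 hg2
  rcases le_total s₁ s₂ with h | h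
  · exact maxRun_overlap h1 h2 h ha2 hb1 hb2
  · have := maxRun_overlap h2 h1 h ha1 hb2 hb1
    exact ⟨this.1.symm, this.2.symm⟩
end

section
/- Let ℓ = 1 and let g(·,1) denote the formal index on {A,T,G,C}^m extending the D-LOCO rule. Let c ∈ D_{m,1} and let w ∈ {A,T,G,C}^m be a word of Hamming distance 1 to c. If w > c in the lexicographic order (A<T<G<C, significance decreasing left to right), then g(w,1) ≥ g(c). -/
/-- Lexicographic order on words, with symbol significance decreasing from left
to right, i.e., increasing with the position index `i` of `c_i`. -/
def lexLt (m : ℕ) (c w : Fin m → Fin 4) : Prop :=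
  ∃ j : Fin m, c j < w j ∧ ∀ k : Fin m, j < k → c k = w k


lemma card_aux1 : ∀ a b e : Fin 4, a < b →
    (Finset.univ.filter fun Δ : Fin 4 => Δ < a ∧ e ≠ Δ).card ≤
    (Finset.univ.filter fun Δ : Fin 4 => Δ < b ∧ e ≠ Δ).card := by decide

lemma card_aux2 : ∀ x a b : Fin 4, a < b →
    (Finset.univ.filter fun Δ : Fin 4 => Δ < x ∧ a ≠ Δ).card ≤
    (Finset.univ.filter fun Δ : Fin 4 => Δ < x ∧ b ≠ Δ).card := by decide

/-- for `c ∈ D_{m,1}` and `w` of Hamming distance 1 to `c` with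
`w > c` lexicographically, the formal index satisfies `g(w,1) ≥ g(c)`. -/
theorem formal_index_monotone_hamming_one (m : ℕ) (c w : Fin m → Fin 4)
    (hc : noAdj m c)
    (hham : ∃ j : Fin m, w j ≠ c j ∧ ∀ k : Fin m, k ≠ j → w k = c k)
    (hlex : lexLt m c w) :
    gidx m c ≤ gidx m w := by
  obtain ⟨j, hj, hagree⟩ := hham
  obtain ⟨j', hj', _⟩ := hlex
  have hjj : j' = j := by
    by_contra h
    exact absurd (hagree j' h) (ne_of_gt hj')
  subst hjj
  have hext : ∀ k : ℕ, k ≠ (j' : ℕ) → ext m c k = ext m w k := by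
    intro k hk
    unfold ext
    split
    · next h =>
      exact (hagree ⟨k, h⟩ (fun he => hk (congrArg Fin.val he))).symm
    · rfl
  have hextc : ext m c (j' : ℕ) = c j' := by simp [ext, j'.isLt]
  have hextw : ext m w (j' : ℕ) = w j' := by simp [ext, j'.isLt]
  apply Finset.sum_le_sum
  intro i _
  unfold contrib
  apply Nat.mul_le_mul_right
  by_cases h1 : i = (j' : ℕ)
  · rw [h1, hextc, hextw, hext ((j' : ℕ) + 1) (by omega)]
    exact card_aux1 _ _ _ hj'
  · rw [← hext i h1]
    by_cases h2 : i + 1 = (j' : ℕ)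
    · rw [h2, hextc, hextw]
      exact card_aux2 _ _ _ hj'
    · rw [← hext (i + 1) h2]
end

section
/- Let ℓ = 1, c ∈ D_{m,1}, and let w be obtained from c by substituting c_i with w_i > c_i at a single position i ≥ 1. Then the change in the i-th symbol contribution g_i(w,w_i) - g_i(c,c_i) equals θ·3^i for some θ ∈ {1,2,3}, and the change in the (i-1)-th symbol contribution g_{i-1}(w,c_{i-1}) - g_{i-1}(c,c_{i-1}) equals θ'·3^(i-1) for some θ' ∈ {0,1}. -/
lemma key1 : ∀ a b s : Fin 4, a < b → s ≠ a →
    ∃ θ ∈ ({1, 2, 3} : Finset ℕ),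
      (Finset.univ.filter fun Δ : Fin 4 => Δ < b ∧ s ≠ Δ).card
        = (Finset.univ.filter fun Δ : Fin 4 => Δ < a ∧ s ≠ Δ).card + θ := by decide

lemma key2 : ∀ a b t : Fin 4, a < b →
    ∃ θ' ∈ ({0, 1} : Finset ℕ),
      (Finset.univ.filter fun Δ : Fin 4 => Δ < t ∧ b ≠ Δ).card
        = (Finset.univ.filter fun Δ : Fin 4 => Δ < t ∧ a ≠ Δ).card + θ' := by decide

/-- for `ℓ = 1`, `c ∈ D_{m,1}`, and `w` obtained from `c` by
substituting `c_i` with `w_i > c_i` at a single position `i ≥ 1`, the change in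
the `i`-th symbol contribution is `θ·3^i` with `θ ∈ {1,2,3}`, and the change in
the `(i-1)`-th symbol contribution is `θ'·3^(i-1)` with `θ' ∈ {0,1}`. -/
theorem contribution_changes_ell_one (m i : ℕ) (c w : Fin m → Fin 4)
    (hc : noAdj m c) (hi : 1 ≤ i) (him : i < m)
    (hlt : ext m c i < ext m w i)
    (heq : ∀ j : ℕ, j ≠ i → ext m c j = ext m w j) :
    (∃ θ ∈ ({1, 2, 3} : Finset ℕ), contrib m w i = contrib m c i + θ * 3 ^ i) ∧
    (∃ θ' ∈ ({0, 1} : Finset ℕ),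
      contrib m w (i - 1) = contrib m c (i - 1) + θ' * 3 ^ (i - 1)) := by
  have hsucc : ext m w (i + 1) = ext m c (i + 1) := (heq (i + 1) (by omega)).symm
  have hprev : ext m w (i - 1) = ext m c (i - 1) := (heq (i - 1) (by omega)).symm
  have hi1 : i - 1 + 1 = i := by omega
  have hsa : ext m c (i + 1) ≠ ext m c i := by
    by_cases h : i + 1 < m
    · exact hc i h
    · have : ext m c (i + 1) = 3 := by simp [ext, h]
      rw [this]
      intro hcontra
      have h3 : (ext m c i : ℕ) = 3 := by rw [← hcontra]; rfl
      have h4 := (ext m w i).isLt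
      rw [Fin.lt_def, h3] at hlt
      omega
  constructor
  · obtain ⟨θ, hθmem, hθ⟩ := key1 (ext m c i) (ext m w i) (ext m c (i + 1)) hlt hsa
    refine ⟨θ, hθmem, ?_⟩
    unfold contrib
    rw [hsucc, hθ, add_mul]
  · obtain ⟨θ', hθ'mem, hθ'⟩ := key2 (ext m c i) (ext m w i) (ext m c (i - 1)) hlt
    refine ⟨θ', hθ'mem, ?_⟩
    unfold contrib
    rw [hprev, hi1, hθ', add_mul]
end

section
/- Let ℓ = 1 and c ∈ D_{m,1}. If w is obtained from c by a single substitution at position i ≥ 1 replacing c_i by w_i > c_i, then the index difference g(w,1) - g(c) lies in the set {θ₁·3^i + θ₂·3^(i-1) : (θ₁,θ₂) ∈ {(1,0),(2,0),(1,1),(2,1),(3,1)}}. -/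
def cnt (x y : Fin 4) : ℕ :=
  (Finset.univ.filter fun Δ : Fin 4 => Δ < x ∧ y ≠ Δ).card

lemma key_s9 : ∀ a b n d : Fin 4, a < b → n ≠ a → d ≠ a →
    ∃ p ∈ ({(1, 0), (2, 0), (1, 1), (2, 1), (3, 1)} : Finset (ℕ × ℕ)),
      cnt b n = cnt a n + p.1 ∧ cnt d b = cnt d a + p.2 := by decide

/-- for `ℓ = 1`, `c ∈ D_{m,1}`, and `w` obtained from `c` by a
single substitution at position `i ≥ 1` with `w_i > c_i`, the index difference
`g(w,1) - g(c)` lies in `{θ₁·3^i + θ₂·3^(i-1) :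
(θ₁,θ₂) ∈ {(1,0),(2,0),(1,1),(2,1),(3,1)}}`. -/
theorem index_error_set_ell_one (m i : ℕ) (c w : Fin m → Fin 4)
    (hc : noAdj m c) (hi : 1 ≤ i) (him : i < m)
    (hlt : ext m c i < ext m w i)
    (heq : ∀ j : ℕ, j ≠ i → ext m c j = ext m w j) :
    ∃ p ∈ ({(1, 0), (2, 0), (1, 1), (2, 1), (3, 1)} : Finset (ℕ × ℕ)),
      gidx m w = gidx m c + (p.1 * 3 ^ i + p.2 * 3 ^ (i - 1)) := by
  set a := ext m c i with ha
  set b := ext m w i with hb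
  set n := ext m c (i + 1) with hn
  set d := ext m c (i - 1) with hd
  have hi1 : i - 1 + 1 = i := by omega
  have hna : n ≠ a := by
    by_cases h : i + 1 < m
    · exact hc i h
    · rw [hn, ext, dif_neg (by omega)]
      intro h3
      have : a < b := hlt
      have : b ≤ 3 := Fin.le_last b
      omega
  have hda : d ≠ a := by
    have := hc (i - 1) (by omega)
    rw [hi1] at this; exact this.symm
  obtain ⟨p, hp, h1, h2⟩ := key_s9 a b n d hlt hna hda
  refine ⟨p, hp, ?_⟩
  -- helper equalities for contributions
  have hcontrib : ∀ (u : Fin m → Fin 4) (j : ℕ),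
      contrib m u j = cnt (ext m u j) (ext m u (j + 1)) * 3 ^ j := fun _ _ => rfl
  have hwn : ext m w (i + 1) = n := (heq (i + 1) (by omega)).symm
  have hwd : ext m w (i - 1) = d := (heq (i - 1) (by omega)).symm
  have hci : contrib m w i = cnt b n * 3 ^ i := by rw [hcontrib, hwn]
  have hci' : contrib m c i = cnt a n * 3 ^ i := rfl
  have hcm : contrib m w (i - 1) = cnt d b * 3 ^ (i - 1) := by
    rw [hcontrib, hwd, hi1]
  have hcm' : contrib m c (i - 1) = cnt d a * 3 ^ (i - 1) := by
    rw [hcontrib, hi1]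
  -- split the sums
  have hmem : i ∈ Finset.range m := Finset.mem_range.mpr him
  have hmem1 : i - 1 ∈ (Finset.range m).erase i :=
    Finset.mem_erase.mpr ⟨by omega, Finset.mem_range.mpr (by omega)⟩
  have hsplit : ∀ u : Fin m → Fin 4, gidx m u =
      (∑ j ∈ ((Finset.range m).erase i).erase (i - 1), contrib m u j)
        + contrib m u (i - 1) + contrib m u i := by
    intro u
    rw [gidx, ← Finset.sum_erase_add _ _ hmem, ← Finset.sum_erase_add _ _ hmem1]
  have hrest : ∑ j ∈ ((Finset.range m).erase i).erase (i - 1), contrib m w j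
      = ∑ j ∈ ((Finset.range m).erase i).erase (i - 1), contrib m c j := by
    apply Finset.sum_congr rfl
    intro j hj
    have hj1 : j ≠ i - 1 := (Finset.mem_erase.mp hj).1
    have hj2 : j ≠ i := (Finset.mem_erase.mp (Finset.mem_erase.mp hj).2).1
    rw [hcontrib, hcontrib, (heq j hj2), (heq (j + 1) (by omega))]
  rw [hsplit w, hsplit c, hrest, hci, hcm, hci', hcm', h1, h2]
  ring
end

section
/- Let R be a positive integer such that the residue map modulo R is injective on the set S ∪ (−S) ∪ {0, N−1}, where S is a finite set of non-negative integers and N−1 ∈ S is allowed. Let C' = {c ∈ C : R divides g(c)} for an injective map g: C → {0,...,N−1}. Then for any c ∈ C' and any integer e ∈ S ∪ (−S), the value e is uniquely determined by (g(c) + e) mod R; that is, if c₁, c₂ ∈ C' and e₁, e₂ ∈ S ∪ (−S) satisfy g(c₁) + e₁ ≡ g(c₂) + e₂ (mod R), then e₁ = e₂. -/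
/-- abstract residue-decoding principle: if the residues modulo
`R` are pairwise distinct on `S ∪ (−S) ∪ {0, N−1}`, `g : C → {0,…,N−1}` is an
injective index map, and `C' = {c : R ∣ g c}`, then for codewords of `C'` the
index error `e ∈ S ∪ (−S)` is uniquely determined by `(g c + e) mod R`. -/
theorem residue_decoding_principle {C : Type*} (R N : ℕ) (hR : 0 < R)
    (S : Finset ℤ) (hS : ∀ e ∈ S, 0 ≤ e)
    (g : C → ℕ) (hginj : Function.Injective g)
    (hrange : ∀ c : C, (g c : ℤ) ≤ (N : ℤ) - 1)
    (hinj : ∀ a ∈ S ∪ S.image (fun x => -x) ∪ {0, (N : ℤ) - 1},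
            ∀ b ∈ S ∪ S.image (fun x => -x) ∪ {0, (N : ℤ) - 1},
            a % (R : ℤ) = b % (R : ℤ) → a = b)
    (c₁ c₂ : C) (hc₁ : (R : ℤ) ∣ (g c₁ : ℤ)) (hc₂ : (R : ℤ) ∣ (g c₂ : ℤ))
    (e₁ e₂ : ℤ)
    (he₁ : e₁ ∈ S ∪ S.image (fun x => -x))
    (he₂ : e₂ ∈ S ∪ S.image (fun x => -x))
    (hcong : ((g c₁ : ℤ) + e₁) % (R : ℤ) = ((g c₂ : ℤ) + e₂) % (R : ℤ)) :
    e₁ = e₂ := by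
  apply hinj e₁ (Finset.mem_union_left _ he₁) e₂ (Finset.mem_union_left _ he₂)
  have h1 : ((g c₁ : ℤ) + e₁) % (R : ℤ) = e₁ % (R : ℤ) := by
    obtain ⟨k, hk⟩ := hc₁
    rw [hk, add_comm, Int.add_mul_emod_self_left]
  have h2 : ((g c₂ : ℤ) + e₂) % (R : ℤ) = e₂ % (R : ℤ) := by
    obtain ⟨k, hk⟩ := hc₂
    rw [hk, add_comm, Int.add_mul_emod_self_left]
  rw [← h1, ← h2, hcong]
end

section
/- Under the hypotheses of the residue-decoding principle, distinct codewords of the subcode C' = {c ∈ C : R | g(c)} that can be corrupted to a common word by single substitutions are distinguishable: if c₁, c₂ ∈ C' and there exists a word w such that g(w) − g(c₁) ∈ E and g(w) − g(c₂) ∈ E, where E is the signed error set on which residues mod R are pairwise distinct, then c₁ = c₂. -/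
/-- distinct subcode codewords that can be corrupted to a common
word by single substitutions are distinguishable: if `g w − g c₁ ∈ E` and
`g w − g c₂ ∈ E` for the signed error set `E` on which residues mod `R` are
pairwise distinct (together with `N−1`), and `R ∣ g c₁`, `R ∣ g c₂`,
then `c₁ = c₂`. -/
theorem subcode_codewords_distinguishable {W : Type*} (R N : ℕ) (hR : 0 < R)
    (Code : Set W) (g : W → ℕ)
    (hginj : Set.InjOn g Code)
    (hrange : ∀ c ∈ Code, (g c : ℤ) ≤ (N : ℤ) - 1)
    (Eplus : Finset ℤ) (hEpos : ∀ e ∈ Eplus, 0 ≤ e)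
    (E : Finset ℤ) (hE : E = Eplus ∪ Eplus.image (fun x => -x) ∪ {0})
    (hinj : ∀ a ∈ E ∪ {(N : ℤ) - 1}, ∀ b ∈ E ∪ {(N : ℤ) - 1},
        a % (R : ℤ) = b % (R : ℤ) → a = b)
    (c₁ c₂ : W) (hc₁ : c₁ ∈ Code) (hc₂ : c₂ ∈ Code)
    (hd₁ : (R : ℤ) ∣ (g c₁ : ℤ)) (hd₂ : (R : ℤ) ∣ (g c₂ : ℤ))
    (w : W)
    (hw₁ : (g w : ℤ) - (g c₁ : ℤ) ∈ E)
    (hw₂ : (g w : ℤ) - (g c₂ : ℤ) ∈ E) :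
    c₁ = c₂ := by
  obtain ⟨k₁, hk₁⟩ := hd₁
  obtain ⟨k₂, hk₂⟩ := hd₂
  have h1 : ((g w : ℤ) - g c₁) % R = (g w : ℤ) % R := by
    rw [hk₁]; simp [Int.sub_emod]
  have h2 : ((g w : ℤ) - g c₂) % R = (g w : ℤ) % R := by
    rw [hk₂]; simp [Int.sub_emod]
  have heq : (g w : ℤ) - g c₁ = (g w : ℤ) - g c₂ :=
    hinj _ (Finset.mem_union_left _ hw₁) _ (Finset.mem_union_left _ hw₂)
      (h1.trans h2.symm)
  exact hginj hc₁ hc₂ (by omega)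
end

section
/- Let ℓ = 2 and c ∈ D_{m,2}. If w is obtained from c by substituting c_i with w_i > c_i at position i ≥ 2, then the change g_i(w,w_i) − g_i(c,c_i) in the i-th symbol contribution lies in the set {θ₁·N(i+1)/4 + θ₂·3N(i)/4 : (θ₁,θ₂) ∈ {(1,0),(2,0),(3,0),(0,1),(1,1),(2,1)}}, where N satisfies N(m) = 3(N(m−1)+N(m−2)) with N(0) = 4/3, N(1) = 4. -/
/-- The cardinality sequence for `ℓ = 2`: `N(0) = 4/3`, `N(1) = 4`,
`N(m) = 3(N(m-1) + N(m-2))`. -/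
def Nq : ℕ → ℚ
  | 0 => 4 / 3
  | 1 => 4
  | n + 2 => 3 * (Nq (n + 1) + Nq n)

/-- The `i`-th symbol contribution for the `ℓ = 2` D-LOCO rule:
`(Σ_Δ δ_{i,1})·N(i+1)/4 + 3·(Σ_Δ δ_{i,2})·N(i)/4`, where
`δ_{i,1} = 1` iff `u_i > Δ ∧ u_{i+1} ≠ Δ` and
`δ_{i,2} = 1` iff `u_i > Δ ∧ u_{i+1} = Δ ∧ u_{i+2} ≠ Δ`. -/
def contrib2 (m : ℕ) (w : Fin m → Fin 4) (i : ℕ) : ℚ :=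
  ((Finset.univ.filter fun Δ : Fin 4 =>
      Δ < ext m w i ∧ ext m w (i + 1) ≠ Δ).card : ℚ) * (Nq (i + 1) / 4) +
  ((Finset.univ.filter fun Δ : Fin 4 =>
      Δ < ext m w i ∧ ext m w (i + 1) = Δ ∧ ext m w (i + 2) ≠ Δ).card : ℚ) *
    (3 * Nq i / 4)

/-- Membership in `D_{m,2}`: no run of length 3. -/
def noRun3 (m : ℕ) (w : Fin m → Fin 4) : Prop :=
  ∀ i : ℕ, i + 2 < m →
    ¬(ext m w (i + 1) = ext m w i ∧ ext m w (i + 2) = ext m w i)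

lemma key_count : ∀ a b x y : Fin 4, a < b → (x = y → x ≠ a) →
    ∃ p ∈ ({(1, 0), (2, 0), (3, 0), (0, 1), (1, 1), (2, 1)} : Finset (ℕ × ℕ)),
      ((Finset.univ.filter fun Δ : Fin 4 => Δ < b ∧ x ≠ Δ).card : ℤ) -
        ((Finset.univ.filter fun Δ : Fin 4 => Δ < a ∧ x ≠ Δ).card : ℤ) = p.1 ∧
      ((Finset.univ.filter fun Δ : Fin 4 => Δ < b ∧ x = Δ ∧ y ≠ Δ).card : ℤ) -
        ((Finset.univ.filter fun Δ : Fin 4 => Δ < a ∧ x = Δ ∧ y ≠ Δ).card : ℤ) = p.2 := by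
  decide

/-- for `ℓ = 2`, `c ∈ D_{m,2}`, and `w` obtained from `c` by
substituting `c_i` with `w_i > c_i` at position `i ≥ 2`, the change in the
`i`-th symbol contribution lies in
`{θ₁·N(i+1)/4 + θ₂·3N(i)/4 : (θ₁,θ₂) ∈ {(1,0),(2,0),(3,0),(0,1),(1,1),(2,1)}}`. -/
theorem contribution_change_ell_two (m i : ℕ) (c w : Fin m → Fin 4)
    (hc : noRun3 m c) (hi : 2 ≤ i) (him : i < m)
    (hlt : ext m c i < ext m w i)
    (heq : ∀ j : ℕ, j ≠ i → ext m c j = ext m w j) :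
    ∃ p ∈ ({(1, 0), (2, 0), (3, 0), (0, 1), (1, 1), (2, 1)} : Finset (ℕ × ℕ)),
      contrib2 m w i - contrib2 m c i =
        (p.1 : ℚ) * (Nq (i + 1) / 4) + (p.2 : ℚ) * (3 * Nq i / 4) := by
  have hx1 : ext m c (i + 1) = ext m w (i + 1) := heq _ (by omega)
  have hx2 : ext m c (i + 2) = ext m w (i + 2) := heq _ (by omega)
  have hcond : ext m c (i + 1) = ext m c (i + 2) → ext m c (i + 1) ≠ ext m c i := by
    intro hxy hxa
    by_cases h2 : i + 2 < m
    · exact hc i h2 ⟨hxa, hxy ▸ hxa⟩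
    · have hy : ext m c (i + 2) = 3 := by
        unfold ext; rw [dif_neg (by omega)]
      have ha3 : ext m c i = (3 : Fin 4) := hxa ▸ (hxy.trans hy)
      have hb := (ext m w i).isLt
      rw [ha3, Fin.lt_def] at hlt
      simp at hlt
      omega
  obtain ⟨p, hp, h1, h2⟩ := key_count (ext m c i) (ext m w i)
    (ext m c (i + 1)) (ext m c (i + 2)) hlt hcond
  refine ⟨p, hp, ?_⟩
  have q1 : ((Finset.univ.filter fun Δ : Fin 4 =>
        Δ < ext m w i ∧ ext m c (i + 1) ≠ Δ).card : ℚ) -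
      ((Finset.univ.filter fun Δ : Fin 4 =>
        Δ < ext m c i ∧ ext m c (i + 1) ≠ Δ).card : ℚ) = p.1 := by
    exact_mod_cast h1
  have q2 : ((Finset.univ.filter fun Δ : Fin 4 =>
        Δ < ext m w i ∧ ext m c (i + 1) = Δ ∧ ext m c (i + 2) ≠ Δ).card : ℚ) -
      ((Finset.univ.filter fun Δ : Fin 4 =>
        Δ < ext m c i ∧ ext m c (i + 1) = Δ ∧ ext m c (i + 2) ≠ Δ).card : ℚ) = p.2 := by
    exact_mod_cast h2
  simp only [contrib2, ← hx1, ← hx2]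
  linear_combination (Nq (i + 1) / 4) * q1 + (3 * Nq i / 4) * q2
end

section
/- Let ℓ = 2 and c ∈ D_{m,2}. If w is obtained from c by substituting c_i with w_i > c_i at position i ≥ 2 and c_{i−1} ≤ c_i, then the symbol contribution at position i−1 is unchanged: g_{i−1}(w, c_{i−1}) = g_{i−1}(c, c_{i−1}). -/
/-- for `ℓ = 2`, `c ∈ D_{m,2}`, and `w` obtained from `c` by
substituting `c_i` with `w_i > c_i` at position `i ≥ 2`, if `c_{i-1} ≤ c_i`
then the symbol contribution at position `i-1` is unchanged. -/
theorem contribution_unchanged_ell_two (m i : ℕ) (c w : Fin m → Fin 4)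
    (hc : noRun3 m c) (hi : 2 ≤ i) (him : i < m)
    (hlt : ext m c i < ext m w i)
    (heq : ∀ j : ℕ, j ≠ i → ext m c j = ext m w j)
    (hle : ext m c (i - 1) ≤ ext m c i) :
    contrib2 m w (i - 1) = contrib2 m c (i - 1) := by
  obtain ⟨n, rfl⟩ : ∃ n, i = n + 2 := ⟨i - 2, by omega⟩
  have e1 : n + 2 - 1 = n + 1 := rfl
  have h0 : ext m c (n + 1) = ext m w (n + 1) := heq _ (by omega)
  have hle' : ext m c (n + 1) ≤ ext m c (n + 2) := hle
  have hkey : ∀ Δ : Fin 4, Δ < ext m c (n + 1) →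
      ext m c (n + 2) ≠ Δ ∧ ext m w (n + 2) ≠ Δ := fun Δ hΔ =>
    ⟨(lt_of_lt_of_le hΔ hle').ne', (lt_of_lt_of_le hΔ (hle'.trans hlt.le)).ne'⟩
  unfold contrib2
  rw [e1]
  congr 2
  · congr 1
    congr 1
    ext Δ
    simp only [Finset.mem_filter, Finset.mem_univ, true_and]
    constructor
    · rintro ⟨hΔ, -⟩
      rw [← h0] at hΔ
      exact ⟨hΔ, (hkey Δ hΔ).1⟩
    · rintro ⟨hΔ, -⟩
      exact ⟨h0 ▸ hΔ, (hkey Δ hΔ).2⟩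
  · congr 1
    congr 1
    ext Δ
    simp only [Finset.mem_filter, Finset.mem_univ, true_and]
    constructor
    · rintro ⟨hΔ, hcon, -⟩
      rw [← h0] at hΔ
      exact absurd hcon (hkey Δ hΔ).2
    · rintro ⟨hΔ, hcon, -⟩
      exact absurd hcon (hkey Δ hΔ).1
end

section
/- Let ℓ = 1 and c ∈ D_{m,1} with m ≥ 2. If w is obtained from c by a single substitution at position i ≥ 1 with w_i > c_i and additionally c_{i−1} < c_i, then g_{i−1}(w, c_{i−1}) = g_{i−1}(c, c_{i−1}); i.e., the symbol contribution at position i−1 is unchanged, so g(w,1) − g(c) = g_i(w,w_i) − g_i(c,c_i). -/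
/-- for `ℓ = 1`, `c ∈ D_{m,1}` with `m ≥ 2`, and `w` obtained
from `c` by a single substitution at position `i ≥ 1` with `w_i > c_i`, if
`c_{i-1} < c_i` then the symbol contribution at position `i-1` is unchanged,
and the index difference equals the change in the `i`-th symbol contribution. -/
theorem contribution_unchanged_ell_one (m i : ℕ) (hm : 2 ≤ m)
    (c w : Fin m → Fin 4)
    (hc : noAdj m c) (hi : 1 ≤ i) (him : i < m)
    (hlt : ext m c i < ext m w i)
    (heq : ∀ j : ℕ, j ≠ i → ext m c j = ext m w j)
    (hprev : ext m c (i - 1) < ext m c i) :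
    contrib m w (i - 1) = contrib m c (i - 1) ∧
    (gidx m w : ℤ) - (gidx m c : ℤ) =
      (contrib m w i : ℤ) - (contrib m c i : ℤ) := by
  have hi1 : i - 1 + 1 = i := Nat.succ_pred_eq_of_pos hi
  have hprev' : ext m c (i - 1) = ext m w (i - 1) :=
    heq (i - 1) (by omega)
  have key : contrib m w (i - 1) = contrib m c (i - 1) := by
    unfold contrib
    congr 1
    apply Finset.card_bij (fun a _ => a) ?_ (fun a b _ _ h => h)
      (fun b hb => ⟨b, ?_, rfl⟩)
    · intro a ha
      simp only [Finset.mem_filter, Finset.mem_univ, true_and, hi1] at ha ⊢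
      rw [← hprev'] at ha
      exact ⟨ha.1, fun h => absurd (h ▸ ha.1) (not_lt.2 hprev.le)⟩
    · simp only [Finset.mem_filter, Finset.mem_univ, true_and, hi1] at hb ⊢
      rw [← hprev']
      exact ⟨hb.1, fun h => absurd (h ▸ (hb.1.trans hprev)) (not_lt.2 hlt.le)⟩
  refine ⟨key, ?_⟩
  have hrest : ∀ j ∈ (Finset.range m).erase i, contrib m w j = contrib m c j := by
    intro j hj
    rcases Finset.mem_erase.1 hj with ⟨hji, _⟩
    by_cases hj1 : j = i - 1
    · exact hj1 ▸ key
    · have h1 : ext m c j = ext m w j := heq j hji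
      have h2 : ext m c (j + 1) = ext m w (j + 1) := heq (j + 1) (by omega)
      unfold contrib
      rw [← h1, ← h2]
  have hw : gidx m w = contrib m w i + ∑ j ∈ (Finset.range m).erase i, contrib m w j :=
    (Finset.add_sum_erase _ _ (Finset.mem_range.2 him)).symm
  have hcs : gidx m c = contrib m c i + ∑ j ∈ (Finset.range m).erase i, contrib m c j :=
    (Finset.add_sum_erase _ _ (Finset.mem_range.2 him)).symm
  rw [hw, hcs, Finset.sum_congr rfl hrest]
  push_cast
  ring
end
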